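/- If A is a unique factorization domain, then every invertible A-module (finitely generated projective of rank 1) is isomorphic to A; equivalently, Pic(A) is trivial. -/

import Mathlib

/-!
Over the fraction field `K` of `A`, fix an isomorphism `e : K ⊗[A] L ≃ K`. An `A`-linear map
`L → K` extends `K`-linearly to `K ⊗[A] L`, so it is a `K`-multiple of `y ↦ e (1 ⊗ y)`. Hence the
endomorphism of `L` attached to `t : Lᵛ ⊗ L` becomes, after the embedding `y ↦ e (1 ⊗ y)` of the
flat module `L` into `K`, multiplication by the contraction of `t`. Since `Lᵛ ⊗ L ≃ End L` for
finite projective `L`, the contraction `Lᵛ ⊗ L → A` is bijective: `L` is invertible. The Picard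
group of a GCD domain, in particular of a UFD, is trivial.
-/

open TensorProduct Module

theorem TensorProduct.mk_one_injective_of_flat {R K L : Type*} [CommRing R] [CommRing K]
    [Algebra R K] [AddCommGroup L] [Module R L] [Module.Flat R L]
    (hinj : Function.Injective (algebraMap R K)) :
    Function.Injective (TensorProduct.mk R K L 1) := by
  have h := (Module.Flat.rTensor_preserves_injective_linearMap (M := L) (Algebra.linearMap R K) hinj).comp
    (TensorProduct.lid R L).symm.injective
  convert h using 1
  ext y
  simp

section BaseChangeLinearEquiv

variable {R K L : Type*} [CommRing R] [Field K] [Algebra R K]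
  [AddCommGroup L] [Module R L] (e : K ⊗[R] L ≃ₗ[K] K)

include e in
theorem exists_apply_eq_mul_of_baseChange_linearEquiv (g : L →ₗ[R] K) :
    ∃ c : K, ∀ y, g y = c * e (1 ⊗ₜ y) := by
  refine ⟨g.liftBaseChange K (e.symm 1), fun y => ?_⟩
  conv_lhs => rw [← g.liftBaseChange_one_tmul K y, ← e.symm_apply_apply (1 ⊗ₜ y),
    ← mul_one (e (1 ⊗ₜ y)), ← smul_eq_mul, map_smul, map_smul, smul_eq_mul, mul_comm]

theorem baseChange_linearEquiv_dualTensorHom_apply (t : Dual R L ⊗[R] L) (y : L) :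
    e (1 ⊗ₜ dualTensorHom R L L t y) = algebraMap R K (contractLeft R L t) * e (1 ⊗ₜ y) := by
  induction t with
  | zero => simp
  | add t u ht hu => simp only [map_add, LinearMap.add_apply, tmul_add, ht, hu, add_mul]
  | tmul g x =>
    obtain ⟨c, hc⟩ := exists_apply_eq_mul_of_baseChange_linearEquiv e (Algebra.linearMap R K ∘ₗ g)
    simp only [LinearMap.comp_apply, Algebra.linearMap_apply] at hc
    rw [dualTensorHom_apply, contractLeft_apply, tmul_smul, algebra_compatible_smul K, map_smul,
      smul_eq_mul, hc, hc]
    ring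

end BaseChangeLinearEquiv

theorem Module.Invertible.of_finrank_baseChange_eq_one {R K L : Type*} [CommRing R] [Field K]
    [Algebra R K] [AddCommGroup L] [Module R L] [Module.Finite R L] [Module.Projective R L]
    (hinj : Function.Injective (algebraMap R K)) (hL : finrank K (K ⊗[R] L) = 1) :
    Module.Invertible R L := by
  let e : K ⊗[R] L ≃ₗ[K] K :=
    (finBasisOfFinrankEq K _ hL).equivFun ≪≫ₗ LinearEquiv.funUnique (Fin 1) K K
  have he : Function.Injective fun y : L => e (1 ⊗ₜ y) :=
    e.injective.comp (TensorProduct.mk_one_injective_of_flat hinj)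
  have : Nontrivial L := by
    by_contra hL0
    rw [not_nontrivial_iff_subsingleton] at hL0
    simp [finrank_zero_of_subsingleton] at hL
  obtain ⟨y₀, hy₀⟩ := exists_ne (0 : L)
  have hey₀ : e (1 ⊗ₜ y₀) ≠ 0 := fun h => hy₀ (he (by simpa using h))
  have hdual := dualTensorHom_bijective_of_finite_projective_right (R := R) (M := L) (N := L)
  refine ⟨⟨?injective, ?surjective⟩⟩
  case injective =>
    rw [injective_iff_map_eq_zero]
    intro t ht
    refine hdual.injective (LinearMap.ext fun y => he ?_)
    simp [baseChange_linearEquiv_dualTensorHom_apply e, ht]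
  case surjective =>
    obtain ⟨t, ht⟩ := hdual.surjective LinearMap.id
    have h1 : contractLeft R L t = 1 := hinj <| mul_left_cancel₀ hey₀ <| by
      simpa [mul_comm, ht] using (baseChange_linearEquiv_dualTensorHom_apply e t y₀).symm
    exact fun a => ⟨a • t, by rw [map_smul, h1, smul_eq_mul, mul_one]⟩

theorem stmt_19 (A : Type*) [CommRing A] [IsDomain A] [UniqueFactorizationMonoid A]
    (L : Type*) [AddCommGroup L] [Module A L]
    [Module.Finite A L] [Module.Projective A L]
    (hrank : ∀ (p : Ideal A), p.IsPrime →
      Module.finrank (FractionRing (A ⧸ p)) ((FractionRing (A ⧸ p)) ⊗[A] L) = 1) :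
    Nonempty (L ≃ₗ[A] A) := by
  have hinj : Function.Injective (algebraMap A (FractionRing (A ⧸ (⊥ : Ideal A)))) := by
    rw [IsScalarTower.algebraMap_eq A (A ⧸ (⊥ : Ideal A)), RingHom.coe_comp]
    exact (IsFractionRing.injective _ _).comp
      ((RingHom.injective_iff_ker_eq_bot _).mpr Ideal.mk_ker)
  have : Module.Invertible A L :=
    .of_finrank_baseChange_eq_one hinj (hrank ⊥ Ideal.isPrime_bot)
  exact CommRing.Pic.mk_eq_one_iff.mp (Subsingleton.elim _ _)
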